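/- Let (X,d) be a finite pseudometric space and let {A₀,B₀} be a partial d-split of X. Then the sum of the isolation indices α^d_{{A,B}}, taken over all d-splits {A,B} of X extending {A₀,B₀} (i.e. splits with A₀ ⊆ A and B₀ ⊆ B and positive isolation index), is at most α^d_{{A₀,B₀}}. -/

import Mathlib

open Set Function

noncomputable section

variable {X : Type*}

/-- `d` is a pseudometric on `X`. -/
def IsPseudometric (d : X → X → ℝ) : Prop :=
  (∀ x, d x x = 0) ∧ (∀ x y, d x y = d y x) ∧ ∀ x y z, d x z ≤ d x y + d y z

/-- `d` is a metric on `X`. -/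
def IsMetric (d : X → X → ℝ) : Prop :=
  IsPseudometric d ∧ ∀ x y, d x y = 0 → x = y

/-- `d` is integer-valued. -/
def IsIntegerValued (d : X → X → ℝ) : Prop := ∀ x y, ∃ n : ℤ, d x y = (n : ℝ)

/-- The quantity `β^d` associated to the four points `a, a', b, b'`. -/
def betaIdx (d : X → X → ℝ) (a a' b b' : X) : ℝ :=
  (max (max (d a b + d a' b') (d a' b + d a b')) (d a a' + d b b') - d a a' - d b b') / 2

/-- The isolation index `α^d_{{A,B}}` of the pair `{A,B}`. -/
def isolIdx (d : X → X → ℝ) (A B : Set X) : ℝ :=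
  sInf {r : ℝ | ∃ a ∈ A, ∃ a' ∈ A, ∃ b ∈ B, ∃ b' ∈ B, r = betaIdx d a a' b b'}

/-- `{A, B}` is a partial split of `X`. -/
def IsPartialSplit (A B : Set X) : Prop := A.Nonempty ∧ B.Nonempty ∧ Disjoint A B

/-- `{A, B}` is a split of `X`. -/
def IsSplit (A B : Set X) : Prop := IsPartialSplit A B ∧ A ∪ B = univ

/-- `{A, B}` is a `d`-split of `X`. -/
def IsDSplit (d : X → X → ℝ) (A B : Set X) : Prop := IsSplit A B ∧ 0 < isolIdx d A B

open Classical in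
/-- The split pseudometric `δ_S` of the split `{A, Aᶜ}`. -/
def splitDist (A : Set X) (x y : X) : ℝ := if x ∈ A ↔ y ∈ A then 0 else 1

/-!
Fix `a, a' ∈ A₀` and `b, b' ∈ B₀`; it suffices to bound the sum by `β^d(a, a', b, b')`, and
this holds for every finite family of splits `{A, Aᶜ}` with `a, a' ∈ A` and `b, b' ∉ A`.
The splits are peeled off one at a time: for a pseudometric `e` and `0 ≤ c ≤ α^e_{A}`,
`e - c • δ_A` is again a pseudometric, its `β(a, a', b, b')` is exactly `c` smaller, and the
isolation index of any other split of the family does not drop. The last point rests on a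
five-point inequality: two distinct splits both separating `{u, u'}` from `{v, v'}` have
isolation indices summing to at most `β(u, u', v, v')`.
-/

theorem betaIdx_eq_max (d : X → X → ℝ) (a a' b b' : X) :
    betaIdx d a a' b b' =
      max (max (d a b + d a' b' - d a a' - d b b') (d a' b + d a b' - d a a' - d b b')) 0 / 2 := by
  simp only [betaIdx, sub_sub, max_sub_sub_right]
  rw [← sub_self (d a a' + d b b'), max_sub_sub_right]

theorem betaIdx_nonneg (d : X → X → ℝ) (a a' b b' : X) : 0 ≤ betaIdx d a a' b b' := by
  rw [betaIdx_eq_max]; positivity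

theorem le_betaIdx_iff {d : X → X → ℝ} {s : ℝ} (hs : 0 < s) (a a' b b' : X) :
    s ≤ betaIdx d a a' b b' ↔
      2 * s + d a a' + d b b' ≤ d a b + d a' b' ∨ 2 * s + d a a' + d b b' ≤ d a' b + d a b' := by
  rw [betaIdx_eq_max, le_div_iff₀ two_pos, le_max_iff, le_max_iff]
  constructor
  · rintro ((h | h) | h) <;> [left; right; linarith] <;> linarith
  · rintro (h | h)
    · exact Or.inl (Or.inl (by linarith))
    · exact Or.inl (Or.inr (by linarith))

theorem add_le_betaIdx_of_le_betaIdx {e : X → X → ℝ} (he : IsPseudometric e) {s t : ℝ}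
    {a a' b b' x : X}
    (hs : s ≤ betaIdx e a a' b b') (ht : t ≤ betaIdx e a a' b b')
    (hsb : s ≤ betaIdx e a a' b x) (hsb' : s ≤ betaIdx e a a' b' x)
    (hta : t ≤ betaIdx e a x b b') (hta' : t ≤ betaIdx e a' x b b') :
    s + t ≤ betaIdx e a a' b b' := by
  obtain ⟨-, hsym, htri⟩ := he
  rcases le_or_gt s 0 with hs0 | hs0
  · linarith
  rcases le_or_gt t 0 with ht0 | ht0
  · linarith
  rw [le_betaIdx_iff (add_pos hs0 ht0)]
  rw [le_betaIdx_iff hs0] at hsb hsb'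
  rw [le_betaIdx_iff ht0] at hta hta'
  by_contra! h
  rcases hsb with hsb | hsb <;> rcases hsb' with hsb' | hsb' <;>
  rcases hta with hta | hta <;> rcases hta' with hta' | hta' <;>
  linarith [htri a a' x, htri b b' x, hsym x b, hsym x b', hsym a x, hsym a' x]

theorem isolIdx_nonneg (d : X → X → ℝ) (A B : Set X) : 0 ≤ isolIdx d A B :=
  Real.sInf_nonneg fun _ ⟨a, _, a', _, b, _, b', _, hr⟩ => hr ▸ betaIdx_nonneg d a a' b b'

theorem isolIdx_le_betaIdx (d : X → X → ℝ) {A B : Set X} {a a' b b' : X}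
    (ha : a ∈ A) (ha' : a' ∈ A) (hb : b ∈ B) (hb' : b' ∈ B) :
    isolIdx d A B ≤ betaIdx d a a' b b' := by
  refine csInf_le ⟨0, ?_⟩ ⟨a, ha, a', ha', b, hb, b', hb', rfl⟩
  rintro _ ⟨a, -, a', -, b, -, b', -, rfl⟩
  exact betaIdx_nonneg d a a' b b'

theorem le_isolIdx {d : X → X → ℝ} {A B : Set X} {m : ℝ} (hA : A.Nonempty) (hB : B.Nonempty)
    (h : ∀ a ∈ A, ∀ a' ∈ A, ∀ b ∈ B, ∀ b' ∈ B, m ≤ betaIdx d a a' b b') :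
    m ≤ isolIdx d A B := by
  obtain ⟨a, ha⟩ := hA
  obtain ⟨b, hb⟩ := hB
  refine le_csInf ⟨_, a, ha, a, ha, b, hb, b, hb, rfl⟩ ?_
  rintro _ ⟨a, ha, a', ha', b, hb, b', hb', rfl⟩
  exact h a ha a' ha' b hb b' hb'

theorem betaIdx_comm {d : X → X → ℝ} (hsym : ∀ x y, d x y = d y x) (a a' b b' : X) :
    betaIdx d b b' a a' = betaIdx d a a' b b' := by
  simp only [betaIdx_eq_max, hsym b a, hsym b' a', hsym b a', hsym b' a]
  ring_nf

theorem isolIdx_comm {d : X → X → ℝ} (hsym : ∀ x y, d x y = d y x) (A B : Set X) :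
    isolIdx d A B = isolIdx d B A := by
  have key : ∀ A B : Set X,
      {r | ∃ a ∈ A, ∃ a' ∈ A, ∃ b ∈ B, ∃ b' ∈ B, r = betaIdx d a a' b b'} ⊆
        {r | ∃ b ∈ B, ∃ b' ∈ B, ∃ a ∈ A, ∃ a' ∈ A, r = betaIdx d b b' a a'} := by
    rintro _ _ _ ⟨a, ha, a', ha', b, hb, b', hb', rfl⟩
    exact ⟨b, hb, b', hb', a, ha, a', ha', (betaIdx_comm hsym a a' b b').symm⟩
  exact congrArg sInf ((key A B).antisymm (key B A))

theorem splitDist_compl (A : Set X) : splitDist Aᶜ = splitDist A := by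
  ext x y
  by_cases hx : x ∈ A <;> by_cases hy : y ∈ A <;> simp [splitDist, hx, hy]

theorem two_mul_isolIdx_le {e : X → X → ℝ} (he : IsPseudometric e) {A B : Set X}
    {u u' v : X} (hu : u ∈ A) (hu' : u' ∈ A) (hv : v ∈ B) :
    2 * isolIdx e A B ≤ e u v + e u' v - e u u' := by
  obtain ⟨h0, hsym, htri⟩ := he
  have hβ := isolIdx_le_betaIdx e hu hu' hv hv
  rw [betaIdx_eq_max, h0] at hβ
  simp only [sub_zero, add_comm (e u' v), max_self] at hβ
  rw [max_eq_left (by linarith [htri u v u', hsym v u'])] at hβ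
  linarith

theorem IsPseudometric.sub_mul_splitDist {e : X → X → ℝ} (he : IsPseudometric e)
    {A : Set X} {c : ℝ} (hc : c ≤ isolIdx e A Aᶜ) :
    IsPseudometric fun x y => e x y - c * splitDist A x y := by
  have hcA : ∀ u u' v, u ∈ A → u' ∈ A → v ∉ A → 2 * c ≤ e u v + e u' v - e u u' :=
    fun u u' v hu hu' hv => by linarith [two_mul_isolIdx_le he (B := Aᶜ) hu hu' hv]
  have hcAc : ∀ u u' v, u ∉ A → u' ∉ A → v ∈ A → 2 * c ≤ e u v + e u' v - e u u' := by
    intro u u' v hu hu' hv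
    have := two_mul_isolIdx_le he (A := Aᶜ) (B := A) hu hu' hv
    rw [isolIdx_comm he.2.1] at this
    linarith
  obtain ⟨h0, hsym, htri⟩ := he
  refine ⟨fun x => by simp [splitDist, h0], fun x y => ?_, fun x y z => ?_⟩
  · by_cases hx : x ∈ A <;> by_cases hy : y ∈ A <;> simp [splitDist, hx, hy, hsym x y]
  · by_cases hx : x ∈ A <;> by_cases hy : y ∈ A <;> by_cases hz : z ∈ A <;>
      simp only [splitDist, hx, hy, hz, iff_true, iff_false, not_true, if_true, if_false,
        mul_zero, mul_one, sub_zero] <;>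
      first
        | linarith [htri x y z]
        | linarith [hcA x z y hx hz hy, hsym z y]
        | linarith [hcAc x z y hx hz hy, hsym z y]

theorem betaIdx_sub_mul_splitDist_of_mem {e : X → X → ℝ} {A : Set X} {c : ℝ} {a a' b b' : X}
    (ha : a ∈ A) (ha' : a' ∈ A) (hb : b ∉ A) (hb' : b' ∉ A) (hc0 : 0 ≤ c)
    (hc : c ≤ betaIdx e a a' b b') :
    betaIdx (fun x y => e x y - c * splitDist A x y) a a' b b' = betaIdx e a a' b b' - c := by
  rw [betaIdx_eq_max] at hc ⊢
  rw [betaIdx_eq_max]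
  simp only [splitDist, ha, ha', hb, hb', iff_false, not_true, if_true, if_false,
    mul_zero, mul_one, sub_zero]
  simp only [max_def] at hc ⊢
  split_ifs at hc ⊢ <;> linarith

theorem betaIdx_le_betaIdx_sub_mul_splitDist {e : X → X → ℝ} {A : Set X} {c : ℝ}
    {a a' b b' : X} (hc : 0 ≤ c) (h : ¬(a ∈ A ∧ a' ∈ A ∧ b ∉ A ∧ b' ∉ A))
    (h' : ¬(a ∉ A ∧ a' ∉ A ∧ b ∈ A ∧ b' ∈ A)) :
    betaIdx e a a' b b' ≤ betaIdx (fun x y => e x y - c * splitDist A x y) a a' b b' := by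
  have hδ : splitDist A a b + splitDist A a' b' ≤ splitDist A a a' + splitDist A b b' ∧
      splitDist A a' b + splitDist A a b' ≤ splitDist A a a' + splitDist A b b' := by
    by_cases ha : a ∈ A <;> by_cases ha' : a' ∈ A <;> by_cases hb : b ∈ A <;>
      by_cases hb' : b' ∈ A <;> simp_all [splitDist]
  rw [betaIdx_eq_max, betaIdx_eq_max]
  gcongr max (max ?_ ?_) 0 / 2
  · nlinarith [mul_le_mul_of_nonneg_left hδ.1 hc]
  · nlinarith [mul_le_mul_of_nonneg_left hδ.2 hc]

theorem isolIdx_add_isolIdx_le_betaIdx {e : X → X → ℝ} (he : IsPseudometric e)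
    {A P : Set X} (hAP : A ≠ P) {a a' b b' : X} (ha : a ∈ A ∩ P) (ha' : a' ∈ A ∩ P)
    (hb : b ∉ A ∪ P) (hb' : b' ∉ A ∪ P) :
    isolIdx e A Aᶜ + isolIdx e P Pᶜ ≤ betaIdx e a a' b b' := by
  wlog hx : ∃ x ∈ A, x ∉ P generalizing A P
  · have hAP' : A ⊆ P := by rwa [← not_subset, not_not] at hx
    obtain ⟨x, hxP, hxA⟩ := exists_of_ssubset (ssubset_iff_subset_ne.2 ⟨hAP', hAP⟩)
    rw [add_comm]
    exact this hAP.symm (inter_comm A P ▸ ha) (inter_comm A P ▸ ha') (union_comm A P ▸ hb)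
      (union_comm A P ▸ hb') ⟨x, hxP, hxA⟩
  obtain ⟨x, hxA, hxP⟩ := hx
  simp only [mem_inter_iff, mem_union, not_or] at ha ha' hb hb'
  rw [add_comm]
  exact add_le_betaIdx_of_le_betaIdx he
    (isolIdx_le_betaIdx e ha.2 ha'.2 hb.2 hb'.2) (isolIdx_le_betaIdx e ha.1 ha'.1 hb.1 hb'.1)
    (isolIdx_le_betaIdx e ha.2 ha'.2 hb.2 hxP) (isolIdx_le_betaIdx e ha.2 ha'.2 hb'.2 hxP)
    (isolIdx_le_betaIdx e ha.1 hxA hb.1 hb'.1) (isolIdx_le_betaIdx e ha'.1 hxA hb.1 hb'.1)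

theorem isolIdx_le_isolIdx_sub_mul_splitDist {e : X → X → ℝ} (he : IsPseudometric e)
    {A P : Set X} (hAP : A ≠ P) (hAP₁ : (A ∩ P).Nonempty) (hAP₂ : (Aᶜ ∩ Pᶜ).Nonempty) {c : ℝ}
    (hc0 : 0 ≤ c) (hc : c ≤ isolIdx e A Aᶜ) :
    isolIdx e P Pᶜ ≤ isolIdx (fun x y => e x y - c * splitDist A x y) P Pᶜ := by
  refine le_isolIdx (hAP₁.mono inter_subset_right) (hAP₂.mono inter_subset_right)
    fun u hu u' hu' v hv v' hv' => ?_
  have hsep : ∀ B : Set X, B ≠ P → c ≤ isolIdx e B Bᶜ → u ∈ B → u' ∈ B → v ∉ B → v' ∉ B →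
      isolIdx e P Pᶜ ≤ betaIdx (fun x y => e x y - c * splitDist B x y) u u' v v' := by
    intro B hBP hcB huB hu'B hvB hv'B
    have hsum := isolIdx_add_isolIdx_le_betaIdx he hBP ⟨huB, hu⟩ ⟨hu'B, hu'⟩
      (fun h => h.elim hvB hv) (fun h => h.elim hv'B hv')
    rw [betaIdx_sub_mul_splitDist_of_mem huB hu'B hvB hv'B hc0
      (by linarith [isolIdx_nonneg e P Pᶜ])]
    linarith
  by_cases hA : u ∈ A ∧ u' ∈ A ∧ v ∉ A ∧ v' ∉ A
  · exact hsep A hAP hc hA.1 hA.2.1 hA.2.2.1 hA.2.2.2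
  by_cases hAc : u ∉ A ∧ u' ∉ A ∧ v ∈ A ∧ v' ∈ A
  · have hAcP : Aᶜ ≠ P := by
      rintro rfl
      simp at hAP₁
    rw [← splitDist_compl A]
    refine hsep Aᶜ hAcP ?_ hAc.1 hAc.2.1 (not_not.2 hAc.2.2.1) (not_not.2 hAc.2.2.2)
    rwa [compl_compl, ← isolIdx_comm he.2.1]
  exact (isolIdx_le_betaIdx e hu hu' hv hv').trans
    (betaIdx_le_betaIdx_sub_mul_splitDist hc0 hA hAc)

theorem sum_le_betaIdx {a a' b b' : X} (w : Set X → ℝ) (s : Finset (Set X))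
    (hs : ∀ A ∈ s, a ∈ A ∧ a' ∈ A ∧ b ∉ A ∧ b' ∉ A) (hw : ∀ A ∈ s, 0 ≤ w A)
    {e : X → X → ℝ} (he : IsPseudometric e) (hwe : ∀ A ∈ s, w A ≤ isolIdx e A Aᶜ) :
    ∑ A ∈ s, w A ≤ betaIdx e a a' b b' := by
  classical
  induction s using Finset.induction_on generalizing e with
  | empty => simpa using betaIdx_nonneg e a a' b b'
  | insert A s hAs ih =>
    simp only [Finset.mem_insert, forall_eq_or_imp] at hs hw hwe
    obtain ⟨⟨ha, ha', hb, hb'⟩, hs⟩ := hs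
    have hwe' : ∀ P ∈ s, w P ≤ isolIdx (fun x y => e x y - w A * splitDist A x y) P Pᶜ :=
      fun P hP => (hwe.2 P hP).trans <| isolIdx_le_isolIdx_sub_mul_splitDist he
        (ne_of_mem_of_not_mem hP hAs).symm ⟨a, ha, (hs P hP).1⟩ ⟨b, hb, (hs P hP).2.2.1⟩
        hw.1 hwe.1
    have hsum := ih hs hw.2 (he.sub_mul_splitDist hwe.1) hwe'
    rw [betaIdx_sub_mul_splitDist_of_mem ha ha' hb hb' hw.1
      (hwe.1.trans (isolIdx_le_betaIdx e ha ha' hb hb'))] at hsum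
    rw [Finset.sum_insert hAs]
    linarith

theorem statement2_general [Finite X] (d : X → X → ℝ) (hd : IsPseudometric d)
    (A₀ B₀ : Set X) (hps : IsPartialSplit A₀ B₀) :
    ∑ᶠ A ∈ {A : Set X | IsDSplit d A Aᶜ ∧ A₀ ⊆ A ∧ B₀ ⊆ Aᶜ}, isolIdx d A Aᶜ
      ≤ isolIdx d A₀ B₀ := by
  rw [finsum_mem_eq_finite_toFinset_sum _ (toFinite _)]
  refine le_isolIdx hps.1 hps.2.1 fun a ha a' ha' b hb b' hb' =>
    sum_le_betaIdx _ _ ?_ (fun A _ => isolIdx_nonneg d A Aᶜ) hd fun A _ => le_rfl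
  intro A hA
  rw [Finite.mem_toFinset] at hA
  exact ⟨hA.2.1 ha, hA.2.1 ha', hA.2.2 hb, hA.2.2 hb'⟩

theorem statement2 [Finite X] (d : X → X → ℝ) (hd : IsPseudometric d)
    (A₀ B₀ : Set X) (hps : IsPartialSplit A₀ B₀) (hpos : 0 < isolIdx d A₀ B₀) :
    ∑ᶠ A ∈ {A : Set X | IsDSplit d A Aᶜ ∧ A₀ ⊆ A ∧ B₀ ⊆ Aᶜ}, isolIdx d A Aᶜ
      ≤ isolIdx d A₀ B₀ :=
  statement2_general d hd A₀ B₀ hps
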